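/- Let V be a vector space over a field 𝔽, n ≥ 2, f an n-linear map on V, and ℬ a basis of V. If [V_{[e_i]}] ≠ [V_{[e_j]}] in ℱ/≈, then f(V, …, ⌢V_{[e_i]} in slot k₁, …, ⌢V_{[e_j]} in slot k₂, …, V) = 0 for all k₁, k₂ ∈ {1,…,n} with k₁ ≠ k₂; that is, ⌢V_{[e_i]} and ⌢V_{[e_j]} are f-orthogonal. -/

import Mathlib

/- Common setting: `V` is a vector space over a field `𝔽`, and `f` is an
`n`-linear map on `V` where `n = m + 1 ≥ 2` (i.e. `1 ≤ m`).  Tuples of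
length `n - 1 = m` index the last arguments of the set-valued map `F`. -/

open scoped Classical

noncomputable section

variable {𝔽 V I : Type*}

/-- The set `V* = V \ {0}` of nonzero vectors. -/
abbrev Vstar (V : Type*) [Zero V] := {v : V // v ≠ 0}

/-- The disjoint union `ℬ ∪̇ ℬ̄`, encoded by indices: `(false, i)` stands for the
basis vector `e i ∈ ℬ` and `(true, i)` for the formal bar symbol `ē i ∈ ℬ̄`. -/
abbrev BSym (I : Type*) := Bool × I

/-- The bar-swap on `ℬ ∪̇ ℬ̄`. -/
def barSwap {I : Type*} (s : BSym I) : BSym I := (!s.1, s.2)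

variable [Field 𝔽] [AddCommGroup V] [Module 𝔽 V] {m : ℕ}

/-- A basis vector, as an element of `V*`. -/
def bstar (b : Module.Basis I 𝔽 V) (i : I) : Vstar V := ⟨b i, b.ne_zero i⟩

/-- The set-valued map `F : 𝒫(V*) × (ℬ ∪̇ ℬ̄)^{n-1} → 𝒫(V*)` associated to the
`n`-linear map `f` and the basis `b` (here `n = m + 1`). -/
def Fmap (b : Module.Basis I 𝔽 V) (f : MultilinearMap 𝔽 (fun _ : Fin (m + 1) => V) V)
    (U : Set (Vstar V)) (ξ : Fin m → BSym I) : Set (Vstar V) :=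
  if ∀ t, (ξ t).1 = false then
    {w | ∃ (k : Fin (m + 1)) (σ : Equiv.Perm (Fin m)), ∃ u ∈ U,
      f (Fin.insertNth k u.1 fun t => b (ξ (σ t)).2) = w.1}
  else if ∀ t, (ξ t).1 = true then
    {w | ∃ (k : Fin (m + 1)) (σ : Equiv.Perm (Fin m)), ∃ u ∈ U,
      f (Fin.insertNth k w.1 fun t => b (ξ (σ t)).2) = u.1}
  else ∅

/-- Iterated application of `F` along a list of `(n-1)`-tuples. -/
def iterF (b : Module.Basis I 𝔽 V) (f : MultilinearMap 𝔽 (fun _ : Fin (m + 1) => V) V) :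
    Set (Vstar V) → List (Fin m → BSym I) → Set (Vstar V)
  | U, [] => U
  | U, X :: Xs => iterF b f (Fmap b f U X) Xs

/-- `X` is a connection from `e i` to `e j`.  (Since `F(∅,⋯) = ∅`, the requirement
that all intermediate iterated images are nonempty is equivalent to the final
image containing `e j`.) -/
def IsConnection (b : Module.Basis I 𝔽 V) (f : MultilinearMap 𝔽 (fun _ : Fin (m + 1) => V) V)
    (i j : I) (X : List (Fin m → BSym I)) : Prop :=
  X ≠ [] ∧ bstar b j ∈ iterF b f {bstar b i} X

/-- `e i` is connected to `e j`. -/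
def Connected (b : Module.Basis I 𝔽 V) (f : MultilinearMap 𝔽 (fun _ : Fin (m + 1) => V) V)
    (i j : I) : Prop :=
  i = j ∨ ∃ X : List (Fin m → BSym I), IsConnection b f i j X

/-- Two subspaces `W₁, W₂` are `f`-orthogonal. -/
def FOrthogonal (f : MultilinearMap 𝔽 (fun _ : Fin (m + 1) => V) V)
    (W₁ W₂ : Submodule 𝔽 V) : Prop :=
  ∀ k₁ k₂ : Fin (m + 1), k₁ ≠ k₂ →
    ∀ v : Fin (m + 1) → V, v k₁ ∈ W₁ → v k₂ ∈ W₂ → f v = 0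

/-- A subspace `W` is strongly `f`-invariant: `f(V,…,W,…,V) ⊆ W` for every slot. -/
def StronglyInvariant (f : MultilinearMap 𝔽 (fun _ : Fin (m + 1) => V) V)
    (W : Submodule 𝔽 V) : Prop :=
  ∀ (k : Fin (m + 1)) (v : Fin (m + 1) → V), v k ∈ W → f v ∈ W

/-- `V_{[e i]}`, the span of the connection class of `e i`. -/
def classSpan (b : Module.Basis I 𝔽 V) (f : MultilinearMap 𝔽 (fun _ : Fin (m + 1) => V) V)
    (i : I) : Submodule 𝔽 V :=
  Submodule.span 𝔽 (⇑b '' {j | Connected b f i j})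

/-- The projection `Π_{V_{[e c]}} : V → V_{[e c]}` relative to the decomposition
`V = ⊕ V_{[e i]}` (expressed through basis coordinates). -/
def projClass (b : Module.Basis I 𝔽 V) (f : MultilinearMap 𝔽 (fun _ : Fin (m + 1) => V) V)
    (c : I) : V →ₗ[𝔽] V :=
  b.constr 𝔽 fun j => if Connected b f c j then b j else 0

/-- One step of the relation `≈`: the sum over `k₁ < k₂` of
`Π_{V_{[c]}}(f(V,…,V_{[d]},…,V_{[d]},…,V)) + Π_{V_{[d]}}(f(V,…,V_{[c]},…,V_{[c]},…,V))`
is nonzero. -/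
def ApproxStep (b : Module.Basis I 𝔽 V) (f : MultilinearMap 𝔽 (fun _ : Fin (m + 1) => V) V)
    (c d : I) : Prop :=
  ∃ k₁ k₂ : Fin (m + 1), k₁ < k₂ ∧
    ((∃ v : Fin (m + 1) → V, v k₁ ∈ classSpan b f d ∧ v k₂ ∈ classSpan b f d ∧
        projClass b f c (f v) ≠ 0) ∨
     (∃ v : Fin (m + 1) → V, v k₁ ∈ classSpan b f c ∧ v k₂ ∈ classSpan b f c ∧
        projClass b f d (f v) ≠ 0))

/-- `V_{[e i]} ≈ V_{[e j]}`: either they coincide (same connection class) or they are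
linked by a finite chain of classes with nonvanishing projection sums. -/
def Approx (b : Module.Basis I 𝔽 V) (f : MultilinearMap 𝔽 (fun _ : Fin (m + 1) => V) V)
    (i j : I) : Prop :=
  Relation.ReflTransGen (fun c d => Connected b f c d ∨ ApproxStep b f c d) i j

/-- `⌢V_{[e i]} = ⊕_{V_{[e j]} ∈ [V_{[e i]}]} V_{[e j]}`. -/
def hatSpan (b : Module.Basis I 𝔽 V) (f : MultilinearMap 𝔽 (fun _ : Fin (m + 1) => V) V)
    (i : I) : Submodule 𝔽 V :=
  Submodule.span 𝔽 (⇑b '' {j | Approx b f i j})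

/-- Two decompositions of `V` as `f`-orthogonal direct sums of strongly `f`-invariant
subspaces (given as the sets of their summands) are isomorphic: there is a linear
automorphism `h` of `V` commuting with `f` carrying the summands of the first
bijectively onto the summands of the second. -/
def IsoDecomp (f : MultilinearMap 𝔽 (fun _ : Fin (m + 1) => V) V)
    (S T : Set (Submodule 𝔽 V)) : Prop :=
  ∃ h : V ≃ₗ[𝔽] V,
    (∀ v : Fin (m + 1) → V, f (fun k => h (v k)) = h (f v)) ∧
    (Submodule.map (h : V →ₗ[𝔽] V)) '' S = T

/-- `X` is a strongly `f'`-invariant subspace of `W`, where `f'` is the restriction of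
`f` to `W`: `f(W,…,X,…,W) ⊆ X` for every slot. -/
def SInvIn (f : MultilinearMap 𝔽 (fun _ : Fin (m + 1) => V) V)
    (W X : Submodule 𝔽 V) : Prop :=
  ∀ (k : Fin (m + 1)) (v : Fin (m + 1) → V), (∀ t, v t ∈ W) → v k ∈ X → f v ∈ X

/-- `W` is `f'`-simple, `f'` being the restriction of `f` to `W`: the restricted map is
nonzero and the only strongly `f'`-invariant subspaces of `W` are `0` and `W`. -/
def SimpleIn (f : MultilinearMap 𝔽 (fun _ : Fin (m + 1) => V) V)
    (W : Submodule 𝔽 V) : Prop :=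
  (∃ v : Fin (m + 1) → V, (∀ t, v t ∈ W) ∧ f v ≠ 0) ∧
  ∀ X : Submodule 𝔽 V, X ≤ W → SInvIn f W X → X = ⊥ ∨ X = W

/-- The annihilator of the restriction `f'` of `f` to `W`. -/
def annIn (f : MultilinearMap 𝔽 (fun _ : Fin (m + 1) => V) V)
    (W : Submodule 𝔽 V) : Set V :=
  {w | w ∈ W ∧ ∀ (k : Fin (m + 1)) (v : Fin (m + 1) → V),
    (∀ t, v t ∈ W) → v k = w → f v = 0}

/-- `𝓘(w)`: the smallest strongly `f'`-invariant subspace of `W` containing `w`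
(equivalently, the ideal of `(W, f')` generated by `w`). -/
def idealGenIn (f : MultilinearMap 𝔽 (fun _ : Fin (m + 1) => V) V)
    (W : Submodule 𝔽 V) (w : V) : Submodule 𝔽 V :=
  sInf {X : Submodule 𝔽 V | X ≤ W ∧ SInvIn f W X ∧ w ∈ X}

/-- `S` is an `i`-division basis of `W` with respect to the restriction `f'` of `f`:
whenever `c ∈ S`, `b₁, …, b_{n-1} ∈ W` and `f'(b₁,…,c,…,b_{n-1}) = w ≠ 0` with `c` in
some slot `k`, then `c, b₁, …, b_{n-1} ∈ 𝓘(w)`. -/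
def IDivisionBasisIn (f : MultilinearMap 𝔽 (fun _ : Fin (m + 1) => V) V)
    (W : Submodule 𝔽 V) (S : Set V) : Prop :=
  ∀ c ∈ S, ∀ (k : Fin (m + 1)) (v : Fin (m + 1) → V),
    (∀ t, v t ∈ W) → v k = c → f v ≠ 0 → ∀ t, v t ∈ idealGenIn f W (f v)

/-! By multilinearity it suffices to treat arguments that are basis vectors
`e_{r 0}, …, e_{r m}`. If `f (e_{r 0}, …, e_{r m}) = w ≠ 0`, then `w` lies in
`F({e_{r k₁}}, ·)` and `e_{r k₂}` in `F({w}, ·)` (the second step with barred symbols), so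
`e_{r k₁} ∼ e_{r k₂}`. As `e_{r k₁}` lies in a class `≈`-related to that of `e i` and
`e_{r k₂}` in one related to that of `e j`, this makes `e i ≈ e j`. The symmetry of `≈` used
here comes from reversing connections: a connection read backwards with all bars swapped is
again a connection. -/

theorem MultilinearMap.apply_eq_zero_of_forall_mem_span {R ι N : Type*} [CommSemiring R]
    [Fintype ι] [DecidableEq ι] {M : ι → Type*} [∀ t, AddCommMonoid (M t)]
    [∀ t, Module R (M t)] [AddCommMonoid N] [Module R N] (g : MultilinearMap R M N)
    {S : ∀ t, Set (M t)} (hg : ∀ v : ∀ t, M t, (∀ t, v t ∈ S t) → g v = 0)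
    {v : ∀ t, M t} (hv : ∀ t, v t ∈ Submodule.span R (S t)) : g v = 0 := by
  suffices key : ∀ s : Finset ι, ∀ v : ∀ t, M t, (∀ t, v t ∈ Submodule.span R (S t)) →
      (∀ t ∉ s, v t ∈ S t) → g v = 0 from
    key Finset.univ v hv fun t ht => (ht (Finset.mem_univ t)).elim
  intro s
  induction s using Finset.induction with
  | empty => exact fun v _ hS => hg v fun t => hS t (Finset.notMem_empty t)
  | insert a s _ ih =>
    intro v hv hS
    suffices hker : S a ⊆ LinearMap.ker (g.toLinearMap v a) by
      simpa using Submodule.span_le.2 hker (hv a)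
    intro x hx
    refine ih _ (fun t => ?_) (fun t ht => ?_)
    all_goals rcases eq_or_ne t a with rfl | hta
    · simpa using Submodule.subset_span hx
    · simpa [hta] using hv t
    · simpa using hx
    · simpa [hta] using hS t (by simp [hta, ht])

section Connection

variable {b : Module.Basis I 𝔽 V} {f : MultilinearMap 𝔽 (fun _ : Fin (m + 1) => V) V}

lemma mem_Fmap_iff {U : Set (Vstar V)} {ξ : Fin m → BSym I} {w : Vstar V} :
    w ∈ Fmap b f U ξ ↔ ∃ u ∈ U, w ∈ Fmap b f {u} ξ := by
  unfold Fmap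
  split_ifs <;> aesop

lemma mem_Fmap_barSwap (hm : 1 ≤ m) {u w : Vstar V} {ξ : Fin m → BSym I}
    (h : w ∈ Fmap b f {u} ξ) : u ∈ Fmap b f {w} (barSwap ∘ ξ) := by
  -- for `m = 0` the empty tuple is both unbarred and barred: `barSwap` keeps the branch of `Fmap`
  have : Nonempty (Fin m) := ⟨⟨0, hm⟩⟩
  unfold Fmap at h ⊢
  split_ifs at h ⊢ <;> simp_all [barSwap]

lemma iterF_append_singleton (U : Set (Vstar V)) (L : List (Fin m → BSym I))
    (ξ : Fin m → BSym I) : iterF b f U (L ++ [ξ]) = Fmap b f (iterF b f U L) ξ := by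
  induction L generalizing U with
  | nil => rfl
  | cons _ _ ih => exact ih _

lemma mem_iterF_iff {U : Set (Vstar V)} {L : List (Fin m → BSym I)} {w : Vstar V} :
    w ∈ iterF b f U L ↔ ∃ u ∈ U, w ∈ iterF b f {u} L := by
  induction L generalizing U with
  | nil => simp [iterF]
  | cons ξ L ih =>
    refine ih.trans ⟨fun ⟨u', hu', hw⟩ => ?_, fun ⟨u, hu, hw⟩ => ?_⟩
    · obtain ⟨u, hu, hu'⟩ := mem_Fmap_iff.1 hu'
      exact ⟨u, hu, ih.2 ⟨u', hu', hw⟩⟩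
    · obtain ⟨u', hu', hw⟩ := ih.1 hw
      exact ⟨u', mem_Fmap_iff.2 ⟨u, hu, hu'⟩, hw⟩

lemma mem_iterF_reverse (hm : 1 ≤ m) {L : List (Fin m → BSym I)} {u w : Vstar V}
    (h : w ∈ iterF b f {u} L) :
    u ∈ iterF b f {w} (L.reverse.map (barSwap ∘ ·)) := by
  induction L generalizing u with
  | nil => simpa [iterF, eq_comm] using h
  | cons ξ L ih =>
    obtain ⟨u', hu', hw⟩ := mem_iterF_iff.1 (show w ∈ iterF b f (Fmap b f {u} ξ) L from h)
    rw [List.reverse_cons, List.map_append, List.map_singleton, iterF_append_singleton]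
    exact mem_Fmap_iff.2 ⟨u', ih hw, mem_Fmap_barSwap hm hu'⟩

lemma Connected.symm (hm : 1 ≤ m) {i j : I} (h : Connected b f i j) : Connected b f j i := by
  rcases h with rfl | ⟨X, hX, hmem⟩
  · exact Or.inl rfl
  · exact Or.inr ⟨_, by simpa using hX, mem_iterF_reverse hm hmem⟩

lemma ApproxStep.symm {c d : I} (h : ApproxStep b f c d) : ApproxStep b f d c :=
  let ⟨k₁, k₂, hk, h⟩ := h
  ⟨k₁, k₂, hk, h.symm⟩

lemma Approx.symm (hm : 1 ≤ m) {i j : I} (h : Approx b f i j) : Approx b f j i :=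
  Relation.ReflTransGen.mono (fun _ _ => Or.imp (Connected.symm hm) ApproxStep.symm) _ _
    (Relation.ReflTransGen.swap _ _ h)

lemma connected_of_apply_ne_zero (hm : 1 ≤ m) {k₁ k₂ : Fin (m + 1)} (r : Fin (m + 1) → I)
    (hf : f (fun t => b (r t)) ≠ 0) : Connected b f (r k₁) (r k₂) := by
  have t₀ : Fin m := ⟨0, hm⟩
  have hslot : ∀ k, Fin.insertNth k (b (r k)) (fun t => b (r (k.succAbove t))) =
      fun t => b (r t) := fun k => Fin.insertNth_self_removeNth k fun t => b (r t)
  let w : Vstar V := ⟨_, hf⟩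
  have hw : w ∈ Fmap b f {bstar b (r k₁)} fun t => (false, r (k₁.succAbove t)) := by
    rw [Fmap, if_pos fun _ => rfl]
    exact ⟨k₁, 1, _, rfl, congrArg f (hslot k₁)⟩
  refine Or.inr ⟨[fun t => (false, r (k₁.succAbove t)), fun t => (true, r (k₂.succAbove t))],
    List.cons_ne_nil _ _, ?_⟩
  change bstar b (r k₂) ∈ Fmap b f (Fmap b f _ _) _
  rw [Fmap, if_neg fun h => Bool.noConfusion (h t₀), if_pos fun _ => rfl]
  exact ⟨k₂, 1, w, hw, congrArg f (hslot k₂)⟩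

end Connection

section Orthogonality

variable {b : Module.Basis I 𝔽 V} {f : MultilinearMap 𝔽 (fun _ : Fin (m + 1) => V) V}

lemma fOrthogonal_span_image_of_apply_eq_zero {A B : Set I}
    (h : ∀ k₁ k₂ : Fin (m + 1), k₁ ≠ k₂ → ∀ r : Fin (m + 1) → I, r k₁ ∈ A → r k₂ ∈ B →
      f (fun t => b (r t)) = 0) :
    FOrthogonal f (Submodule.span 𝔽 (b '' A)) (Submodule.span 𝔽 (b '' B)) := by
  intro k₁ k₂ hk v hv₁ hv₂
  let P : Fin (m + 1) → Set I := fun t => if t = k₁ then A else if t = k₂ then B else Set.univ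
  refine f.apply_eq_zero_of_forall_mem_span (S := fun t => b '' P t) (fun u hu => ?_)
    fun t => ?_
  · choose r hr hru using hu
    obtain rfl : (fun t => b (r t)) = u := funext hru
    exact h k₁ k₂ hk r (by simpa [P] using hr k₁) (by simpa [P, hk.symm] using hr k₂)
  · by_cases h₁ : t = k₁
    · subst h₁; simpa [P] using hv₁
    by_cases h₂ : t = k₂
    · subst h₂; simpa [P, hk.symm] using hv₂
    · simp [P, h₁, h₂, b.span_eq]

end Orthogonality

/-- `⌢V_{[e i]}` and `⌢V_{[e j]}` are `f`-orthogonal for distinct `≈`-classes. -/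
theorem stmt8 (hm : 1 ≤ m) (b : Module.Basis I 𝔽 V)
    (f : MultilinearMap 𝔽 (fun _ : Fin (m + 1) => V) V)
    (i j : I) (h : ¬ Approx b f i j) :
    FOrthogonal f (hatSpan b f i) (hatSpan b f j) := by
  refine fOrthogonal_span_image_of_apply_eq_zero fun k₁ k₂ _ r hi hj => ?_
  by_contra hne
  have hconn : Connected b f (r k₁) (r k₂) := connected_of_apply_ne_zero hm r hne
  exact h ((Relation.ReflTransGen.tail hi (Or.inl hconn)).trans (Approx.symm hm hj))
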